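/- arXiv:1303.7318 — 2 statements merged into one kernel-verified Lean document; each statement's English description precedes it below -/
import Mathlib

section
/- Let n ≥ 1, β ∈ (0,1), and N ≥ max(2n/(1-β), 3) an integer. Let M_1,...,M_n be independent, with M_k negative binomial on {N, N+1,...} with success probability α_k ∈ (0,1], i.e. P(M_k=m) = C(m-1,N-1)α_k^N(1-α_k)^{m-N}. Then E[(∏_{k=1}^n (1/(M_k-1)) / ∏_{k=1}^n (α_k/(N-1)) − 1)²] ≤ n/(β N). -/
/-- pmf of the negative binomial number of trials `M = N + m` needed to obtain
`N` successes with success probability `α`. -/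
noncomputable def nbTrialsPMF (N : ℕ) (α : ℝ) (m : ℕ) : ℝ :=
  (Nat.choose (N + m - 1) (N - 1) : ℝ) * α ^ N * (1 - α) ^ m

/-!
If `M` is negative binomial with parameters `N` and `α`, the identity
`C(M-1, N-1) (N-1)_j = (M-1)_j C(M-1-j, N-1-j)` turns `E[1/(M-1)_j]` into the total mass of a
negative binomial series of order `N - j`, so `E[1/(M-1)_j] = α^j/(N-1)_j`. Hence `X = 1/(M-1)`
has mean `α/(N-1)` and, as `(M-1)² ≥ (M-1)(M-2)`, relative second moment at most `(N-1)/(N-2)`.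
By independence the relative second moment of the product is the product of these, so the
relative variance is at most `((N-1)/(N-2))^n - 1`, which Bernoulli's inequality bounds by
`n/(N-1-n) ≤ n/(βN)`.
-/

open Finset

theorem Nat.choose_mul_descFactorial {a b j : ℕ} (hjb : j ≤ b) :
    a.choose b * b.descFactorial j = a.descFactorial j * (a - j).choose (b - j) := by
  rw [Nat.descFactorial_eq_factorial_mul_choose, Nat.descFactorial_eq_factorial_mul_choose,
    mul_left_comm, Nat.choose_mul hjb, mul_assoc]

theorem hasSum_pi_prod_of_nonneg {β : Type*} {n : ℕ} {f : Fin n → β → ℝ} {s : Fin n → ℝ}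
    (hf0 : ∀ k b, 0 ≤ f k b) (hf : ∀ k, HasSum (f k) (s k)) :
    HasSum (fun b : Fin n → β ↦ ∏ k, f k (b k)) (∏ k, s k) := by
  induction n with
  | zero => simp
  | succ n ih =>
    set g : (Fin n → β) → ℝ := fun b ↦ ∏ k : Fin n, f k.succ (b k)
    have htail : HasSum g (∏ k : Fin n, s k.succ) := ih (fun k ↦ hf0 k.succ) (fun k ↦ hf k.succ)
    have hg0 : 0 ≤ g := fun b ↦ prod_nonneg fun k _ ↦ hf0 k.succ (b k)
    have hprod := (hf 0).mul htail ((hf 0).summable.mul_of_nonneg htail.summable (hf0 0) hg0)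
    rw [Fin.prod_univ_succ, ← (Fin.consEquiv fun _ ↦ β).hasSum_iff]
    have hcons : (fun b ↦ ∏ k, f k (b k)) ∘ Fin.consEquiv (fun _ ↦ β) =
        fun x ↦ f 0 x.1 * g x.2 := by
      funext ⟨b₀, b⟩
      simp [Fin.prod_univ_succ, g]
    rwa [hcons]

theorem HasSum.mul_div_sub_one_sq {ι : Type*} {p X : ι → ℝ} {μ s : ℝ} (hp : HasSum p 1)
    (hX : HasSum (fun i ↦ p i * X i) μ) (hX2 : HasSum (fun i ↦ p i * X i ^ 2) s) (hμ : μ ≠ 0) :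
    HasSum (fun i ↦ p i * (X i / μ - 1) ^ 2) (s / μ ^ 2 - 1) := by
  have hexp (i : ι) :
      p i * (X i / μ - 1) ^ 2 = p i * X i ^ 2 / μ ^ 2 - 2 * (p i * X i / μ) + p i := by
    field_simp; ring
  have hval : s / μ ^ 2 - 1 = s / μ ^ 2 - 2 * (μ / μ) + 1 := by
    rw [div_self hμ]; ring
  rw [funext hexp, hval]
  exact ((hX2.div_const _).sub ((hX.div_const μ).mul_left 2)).add hp

theorem div_sub_two_pow_le {n : ℕ} {c : ℝ} (hc : 2 < c) (hn : n + 1 < c) :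
    ((c - 1) / (c - 2)) ^ n ≤ (c - 1) / (c - 1 - n) := by
  have hc1 : 0 < c - 1 := by linarith
  have hbern := one_add_mul_le_pow (a := -1 / (c - 1)) ?_ n
  · rw [show 1 + -1 / (c - 1) = (c - 2) / (c - 1) by field_simp; ring,
      show 1 + n * (-1 / (c - 1)) = (c - 1 - n) / (c - 1) by field_simp; ring] at hbern
    rw [← inv_div, inv_pow, ← inv_div (c - 1 - n)]
    exact inv_anti₀ (div_pos (by linarith) (by linarith)) hbern
  · rw [neg_div, neg_le_neg_iff, div_le_iff₀ hc1]
    linarith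

theorem div_sub_two_pow_sub_one_le {n : ℕ} {β c : ℝ} (hn : 1 ≤ n) (hβ : 0 < β) (hc : 3 ≤ c)
    (h : 2 * n ≤ (1 - β) * c) : ((c - 1) / (c - 2)) ^ n - 1 ≤ n / (β * c) := by
  have hn' : (1 : ℝ) ≤ n := by exact_mod_cast hn
  have hβc : β * c ≤ c - 1 - n := by linarith
  have hpos : 0 < c - 1 - n := by nlinarith
  calc ((c - 1) / (c - 2)) ^ n - 1 ≤ (c - 1) / (c - 1 - n) - 1 := by
        gcongr
        exact div_sub_two_pow_le (by linarith) (by nlinarith)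
    _ = n / (c - 1 - n) := by field_simp; ring
    _ ≤ n / (β * c) := by gcongr

section NegativeBinomial

variable {N : ℕ} {α : ℝ}

theorem nbTrialsPMF_nonneg (hα0 : 0 ≤ α) (hα1 : α ≤ 1) (m : ℕ) :
    0 ≤ nbTrialsPMF N α m := by
  have : 0 ≤ 1 - α := by linarith
  unfold nbTrialsPMF
  positivity

theorem hasSum_nbTrialsPMF_div_descFactorial {j : ℕ} (hjN : j < N) (hα0 : 0 < α)
    (hα1 : α ≤ 1) :
    HasSum (fun m ↦ nbTrialsPMF N α m / (N + m - 1).descFactorial j)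
      (α ^ j / (N - 1).descFactorial j) := by
  have hq : ‖1 - α‖ < 1 := by rw [Real.norm_eq_abs, abs_lt]; constructor <;> linarith
  have hpos : (0 : ℝ) < (N - 1).descFactorial j := by
    exact_mod_cast Nat.descFactorial_pos.2 (by omega)
  have hterm (m : ℕ) : nbTrialsPMF N α m / (N + m - 1).descFactorial j =
      α ^ N / (N - 1).descFactorial j * ((m + (N - 1 - j)).choose (N - 1 - j) * (1 - α) ^ m) := by
    have hpos' : (0 : ℝ) < (N + m - 1).descFactorial j := by
      exact_mod_cast Nat.descFactorial_pos.2 (by omega)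
    have key : ((N + m - 1).choose (N - 1) * (N - 1).descFactorial j : ℝ) =
        (N + m - 1).descFactorial j * (m + (N - 1 - j)).choose (N - 1 - j) := by
      rw [show m + (N - 1 - j) = N + m - 1 - j by omega]
      exact_mod_cast Nat.choose_mul_descFactorial (by omega)
    rw [nbTrialsPMF]
    field_simp
    linear_combination (1 - α) ^ m * key
  have hsum : α ^ j / (N - 1).descFactorial j =
      α ^ N / (N - 1).descFactorial j * (1 / (1 - (1 - α)) ^ (N - 1 - j + 1)) := by
    rw [sub_sub_cancel, show N - 1 - j + 1 = N - j by omega]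
    field_simp
    rw [← pow_add, show j + (N - j) = N by omega]
  rw [funext hterm, hsum]
  exact (hasSum_choose_mul_geometric_of_norm_lt_one (N - 1 - j) hq).mul_left _

theorem hasSum_nbTrialsPMF (hN : 1 ≤ N) (hα0 : 0 < α) (hα1 : α ≤ 1) :
    HasSum (nbTrialsPMF N α) 1 := by
  simpa using hasSum_nbTrialsPMF_div_descFactorial (j := 0) hN hα0 hα1

theorem hasSum_nbTrialsPMF_mul_inv (hN : 2 ≤ N) (hα0 : 0 < α) (hα1 : α ≤ 1) :
    HasSum (fun m ↦ nbTrialsPMF N α m * (1 / ((N : ℝ) + m - 1))) (α / (N - 1)) := by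
  have h := hasSum_nbTrialsPMF_div_descFactorial (N := N) (j := 1) (by omega) hα0 hα1
  simpa (disch := omega) only [Nat.descFactorial_one, Nat.cast_pred, Nat.cast_add, pow_one,
    ← div_eq_mul_one_div] using h

theorem exists_hasSum_nbTrialsPMF_mul_inv_sq_le (hN : 3 ≤ N) (hα0 : 0 < α) (hα1 : α ≤ 1) :
    ∃ s ≤ α ^ 2 / ((N - 1) * (N - 2)),
      HasSum (fun m ↦ nbTrialsPMF N α m * (1 / ((N : ℝ) + m - 1)) ^ 2) s := by
  have h := hasSum_nbTrialsPMF_div_descFactorial (N := N) (j := 2) (by omega) hα0 hα1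
  simp (disch := omega) only [Nat.cast_descFactorial_two, Nat.cast_pred, Nat.cast_add, sub_sub,
    one_add_one_eq_two] at h
  have hp := nbTrialsPMF_nonneg (N := N) hα0.le hα1
  have hle (m : ℕ) : nbTrialsPMF N α m * (1 / ((N : ℝ) + m - 1)) ^ 2 ≤
      nbTrialsPMF N α m / ((N + m - 1) * (N + m - 2)) := by
    have hM : (2 : ℝ) ≤ N + m - 1 := by
      have : (3 : ℝ) ≤ N := by exact_mod_cast hN
      linarith [m.cast_nonneg (α := ℝ)]
    rw [div_pow, one_pow, mul_one_div]
    gcongr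
    · exact hp m
    · nlinarith
    · nlinarith
  have hs := Summable.of_nonneg_of_le (fun m ↦ mul_nonneg (hp m) (sq_nonneg _)) hle h.summable
  exact ⟨_, hasSum_le hle hs.hasSum h, hs.hasSum⟩

end NegativeBinomial

/-- Relative variance bound for the product of independent negative binomial
estimators: if `N ≥ max(2n/(1-β), 3)` then
`E[(∏_k (1/(M_k-1)) / ∏_k (α_k/(N-1)) - 1)²] ≤ n/(βN)`. -/
theorem nb_product_relative_variance_le (n : ℕ) (hn : 1 ≤ n)
    (β : ℝ) (hβ0 : 0 < β) (hβ1 : β < 1)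
    (N : ℕ) (hN1 : 2 * (n : ℝ) / (1 - β) ≤ N) (hN2 : 3 ≤ N)
    (α : Fin n → ℝ) (hα0 : ∀ k, 0 < α k) (hα1 : ∀ k, α k ≤ 1) :
    ∑' m : Fin n → ℕ,
        (∏ k, nbTrialsPMF N (α k) (m k)) *
          ((∏ k, (1 : ℝ) / ((N : ℝ) + m k - 1)) / (∏ k, α k / ((N : ℝ) - 1)) - 1) ^ 2
      ≤ (n : ℝ) / (β * N) := by
  have hN : (3 : ℝ) ≤ N := by exact_mod_cast hN2
  have hp k := nbTrialsPMF_nonneg (N := N) (hα0 k).le (hα1 k)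
  have hX (m : ℕ) : (0 : ℝ) ≤ 1 / ((N : ℝ) + m - 1) := by
    have : (0 : ℝ) ≤ m := m.cast_nonneg
    exact one_div_nonneg.2 (by linarith)
  have hμ k : 0 < α k / ((N : ℝ) - 1) := div_pos (hα0 k) (by linarith)
  choose s hs_le hs using fun k ↦ exists_hasSum_nbTrialsPMF_mul_inv_sq_le hN2 (hα0 k) (hα1 k)
  have hmass := hasSum_pi_prod_of_nonneg hp fun k ↦ hasSum_nbTrialsPMF (by omega) (hα0 k) (hα1 k)
  have hmean := hasSum_pi_prod_of_nonneg (fun k m ↦ mul_nonneg (hp k m) (hX m))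
    fun k ↦ hasSum_nbTrialsPMF_mul_inv (by omega) (hα0 k) (hα1 k)
  have hsecond :=
    hasSum_pi_prod_of_nonneg (fun k m ↦ mul_nonneg (hp k m) (pow_nonneg (hX m) 2)) hs
  rw [prod_const_one] at hmass
  simp only [prod_mul_distrib, prod_pow] at hmean hsecond
  rw [(hmass.mul_div_sub_one_sq hmean hsecond (prod_pos fun k _ ↦ hμ k).ne').tsum_eq,
    ← prod_pow, ← prod_div_distrib]
  have hs0 k : 0 ≤ s k := (hs k).nonneg fun m ↦ mul_nonneg (hp k m) (pow_nonneg (hX m) 2)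
  have hratio k : s k / (α k / ((N : ℝ) - 1)) ^ 2 ≤ ((N : ℝ) - 1) / (N - 2) := by
    rw [div_le_iff₀ (pow_pos (hμ k) 2)]
    refine (hs_le k).trans_eq ?_
    field_simp
  calc ∏ k, s k / (α k / ((N : ℝ) - 1)) ^ 2 - 1 ≤ (((N : ℝ) - 1) / (N - 2)) ^ n - 1 := by
        gcongr
        refine (prod_le_prod (fun k _ ↦ div_nonneg (hs0 k) (sq_nonneg _))
          fun k _ ↦ hratio k).trans_eq ?_
        rw [prod_const, card_fin]
    _ ≤ n / (β * N) :=
        div_sub_two_pow_sub_one_le hn hβ0 hN (by rw [div_le_iff₀ (by linarith)] at hN1; linarith)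
end

section
/- For integers n ≥ 2 and real N ≥ n/3 (with N > 0), one has ∑_{i=2}^n C(n,i) N^{n-i} (-2)^i ≥ 0. -/
/-- For `n ≥ 2` and real `N ≥ n/3` with `N > 0`:
`∑_{i=2}^n C(n,i) N^{n-i} (-2)^i ≥ 0`. -/
theorem binomial_sum_neg_two_nonneg (n : ℕ) (hn : 2 ≤ n)
    (N : ℝ) (hN : (n : ℝ) / 3 ≤ N) (hNpos : 0 < N) :
    0 ≤ ∑ i ∈ Finset.Icc 2 n, (Nat.choose n i : ℝ) * N ^ (n - i) * (-2 : ℝ) ^ i := by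
  have key : ∑ i ∈ Finset.Icc 2 n, (Nat.choose n i : ℝ) * N ^ (n - i) * (-2 : ℝ) ^ i
      = (N - 2) ^ n - N ^ n + 2 * n * N ^ (n - 1) := by
    have h1 : (N - 2) ^ n
        = ∑ i ∈ Finset.range (n + 1), (-2 : ℝ) ^ i * N ^ (n - i) * n.choose i := by
      rw [show N - 2 = -2 + N by ring, add_pow]
    have h2 : Finset.range (n + 1) = insert 0 (insert 1 (Finset.Icc 2 n)) := by
      ext x; simp [Nat.lt_succ_iff]; omega
    rw [h2, Finset.sum_insert (by simp), Finset.sum_insert (by simp)] at h1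
    simp only [pow_zero, Nat.sub_zero, Nat.choose_zero_right, Nat.cast_one, mul_one, one_mul,
      pow_one, Nat.choose_one_right] at h1
    have h3 : ∑ i ∈ Finset.Icc 2 n, (Nat.choose n i : ℝ) * N ^ (n - i) * (-2 : ℝ) ^ i
        = ∑ i ∈ Finset.Icc 2 n, (-2 : ℝ) ^ i * N ^ (n - i) * n.choose i := by
      apply Finset.sum_congr rfl; intro i _; ring
    rw [h3]; linarith [h1]
  rw [key]
  rcases le_or_gt 1 N with h1 | h1
  · have habs : |N - 2| ≤ N := abs_le.2 ⟨by linarith, by linarith⟩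
    have hgeom : (∑ i ∈ Finset.range n, N ^ i * (N - 2) ^ (n - 1 - i)) * (N - (N - 2))
        = N ^ n - (N - 2) ^ n := geom_sum₂_mul N (N - 2) n
    have hbound : ∑ i ∈ Finset.range n, N ^ i * (N - 2) ^ (n - 1 - i)
        ≤ (n : ℝ) * N ^ (n - 1) := by
      calc ∑ i ∈ Finset.range n, N ^ i * (N - 2) ^ (n - 1 - i)
          ≤ ∑ _i ∈ Finset.range n, N ^ (n - 1) := by
            apply Finset.sum_le_sum
            intro i hi
            have hi' : i < n := Finset.mem_range.mp hi
            calc N ^ i * (N - 2) ^ (n - 1 - i)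
                ≤ |N ^ i * (N - 2) ^ (n - 1 - i)| := le_abs_self _
              _ = N ^ i * |N - 2| ^ (n - 1 - i) := by
                  rw [abs_mul, abs_pow, abs_pow, abs_of_pos hNpos]
              _ ≤ N ^ i * N ^ (n - 1 - i) := by
                  apply mul_le_mul_of_nonneg_left _ (by positivity)
                  exact pow_le_pow_left₀ (abs_nonneg _) habs _
              _ = N ^ (n - 1) := by
                  rw [← pow_add]; congr 1; omega
        _ = (n : ℝ) * N ^ (n - 1) := by
            rw [Finset.sum_const, Finset.card_range, nsmul_eq_mul]
    nlinarith [hgeom, hbound]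
  · have hn2 : n = 2 := by
      have h3 : (n : ℝ) < 3 := by linarith
      have : n < 3 := by exact_mod_cast h3
      omega
    subst hn2
    norm_num
    nlinarith
end
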